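/- For bases A, B of a matroid M on a linearly ordered set E, the following are equivalent: (1) A ⊆ B ∪ EA(B); (2) A ∪ EA(A) ⊆ B ∪ EA(B). (This common condition defines the external order A ≤_ext B on bases.) -/

import Mathlib

open Set

variable {α : Type*}

/-- A circuit of a matroid: a minimal dependent set. -/
def Matroid.Cct (M : Matroid α) (C : Set α) : Prop :=
  M.Dep C ∧ ∀ D ⊂ C, ¬ M.Dep D

/-- The externally active elements with respect to `S`: elements `e ∈ E \ S` that are the
maximum of some circuit contained in `S ∪ {e}`. -/
def Matroid.exA [LinearOrder α] (M : Matroid α) (S : Set α) : Set α :=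
  {e | e ∈ M.E \ S ∧ ∃ C, M.Cct C ∧ C ⊆ insert e S ∧ ∀ f ∈ C, f ≤ e}

/-- The externally passive elements with respect to `S`. -/
def Matroid.exP [LinearOrder α] (M : Matroid α) (S : Set α) : Set α :=
  (M.E \ S) \ M.exA S

/-- The internally active elements with respect to `S`: elements of `S` that are externally
active with respect to `E \ S` in the dual matroid. -/
def Matroid.inA [LinearOrder α] (M : Matroid α) (S : Set α) : Set α :=
  {i | i ∈ S ∧ i ∈ M✶.exA (M.E \ S)}

/-- The internally passive elements with respect to `S`. -/
def Matroid.inP [LinearOrder α] (M : Matroid α) (S : Set α) : Set α :=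
  S \ M.inA S

/-- `I` is internally related to the basis `B` if `I = B \ Y` for some `Y ⊆ IA(B)`. -/
def Matroid.IntRelated [LinearOrder α] (M : Matroid α) (I B : Set α) : Prop :=
  M.IsBase B ∧ ∃ Y ⊆ M.inA B, I = B \ Y

/-- The external/internal order on independent sets. -/
def Matroid.extIntLE [LinearOrder α] (M : Matroid α) (I J : Set α) : Prop :=
  ((∃ B, M.IntRelated I B ∧ M.IntRelated J B) ∧ I ⊆ J) ∨
  ((¬ ∃ B, M.IntRelated I B ∧ M.IntRelated J B) ∧
    (I \ M.inA I) ∪ M.exA I ⊆ (J \ M.inA J) ∪ M.exA J)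

/-!
For an independent set `S`, an element `e ∉ S` is externally active exactly when it lies in the
closure of the elements of `S` below `e`. If `A ⊆ B ∪ EA(B)`, every element of `A` below `e`
is then spanned by the elements of `B` below `e`, so an externally active element of `A` is
spanned by the elements of `B` below it, i.e. it lies in `B ∪ EA(B)`.
-/

namespace Matroid

variable {M : Matroid α} {S A B : Set α} {e f : α}

lemma cct_iff_isCircuit {C : Set α} : M.Cct C ↔ M.IsCircuit C :=
  minimal_iff_forall_ssubset.symm

section LinearOrder

variable [LinearOrder α]

lemma Indep.mem_exA_iff (hS : M.Indep S) :
    e ∈ M.exA S ↔ e ∈ M.E \ S ∧ e ∈ M.closure {f ∈ S | f < e} := by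
  refine and_congr_right fun heS => ⟨?_, fun he => ?_⟩
  · rintro ⟨C, hC, hCS, hCe⟩
    rw [cct_iff_isCircuit] at hC
    have heC : e ∈ C := by
      by_contra heC
      exact hC.not_indep (hS.subset fun x hx => (hCS hx).resolve_left (ne_of_mem_of_not_mem hx heC))
    have hCS' : C \ {e} ⊆ {f ∈ S | f < e} := fun x ⟨hxC, hxe⟩ =>
      ⟨(hCS hxC).resolve_left hxe, (hCe x hxC).lt_of_ne hxe⟩
    exact M.closure_subset_closure hCS' (hC.mem_closure_sdiff_singleton_of_mem heC)
  · obtain ⟨C, hCe, hC, -⟩ := M.exists_isCircuit_of_mem_closure he fun h => heS.2 h.1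
    refine ⟨C, cct_iff_isCircuit.2 hC, hCe.trans (insert_subset_insert fun x hx => hx.1), ?_⟩
    rintro f hf
    obtain rfl | hf := hCe hf
    exacts [le_rfl, hf.2.le]

lemma Indep.mem_closure_of_mem_union_exA (hS : M.Indep S) (hf : f ∈ S ∪ M.exA S) (hfe : f < e) :
    f ∈ M.closure {x ∈ S | x < e} := by
  obtain hfS | hf := hf
  · exact M.subset_closure _ (fun x hx => hS.subset_ground hx.1) ⟨hfS, hfe⟩
  · have hlt : {x ∈ S | x < f} ⊆ {x ∈ S | x < e} := fun x hx => ⟨hx.1, hx.2.trans hfe⟩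
    exact M.closure_subset_closure hlt (hS.mem_exA_iff.1 hf).2

lemma Indep.exA_subset_union_exA (hA : M.Indep A) (hB : M.Indep B) (h : A ⊆ B ∪ M.exA B) :
    M.exA A ⊆ B ∪ M.exA B := by
  intro e he
  obtain ⟨heA, heclA⟩ := hA.mem_exA_iff.1 he
  have hAB : {f ∈ A | f < e} ⊆ M.closure {f ∈ B | f < e} :=
    fun f ⟨hfA, hfe⟩ => hB.mem_closure_of_mem_union_exA (h hfA) hfe
  have heclB : e ∈ M.closure {f ∈ B | f < e} :=
    M.closure_subset_closure_of_subset_closure hAB heclA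
  by_cases heB : e ∈ B
  · exact Or.inl heB
  · exact Or.inr (hB.mem_exA_iff.2 ⟨⟨heA.1, heB⟩, heclB⟩)

end LinearOrder

end Matroid

theorem external_order_tfae_general [LinearOrder α] (M : Matroid α)
    (A B : Set α) (hA : M.IsBase A) (hB : M.IsBase B) :
    A ⊆ B ∪ M.exA B ↔ A ∪ M.exA A ⊆ B ∪ M.exA B :=
  ⟨fun h => union_subset h (hA.indep.exA_subset_union_exA hB.indep h),
    subset_union_left.trans⟩

/-- The two equivalent conditions defining Las Vergnas's external order on bases. -/
theorem external_order_tfae [LinearOrder α] (M : Matroid α) [M.Finite]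
    (A B : Set α) (hA : M.IsBase A) (hB : M.IsBase B) :
    A ⊆ B ∪ M.exA B ↔ A ∪ M.exA A ⊆ B ∪ M.exA B :=
  external_order_tfae_general M A B hA hB
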